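/- arXiv:2510.15563 — 6 statements merged into one kernel-verified Lean document; each statement's English description precedes it below -/
import Mathlib

section
/- Let W_1, ..., W_L be real matrices of compatible sizes (W_l of size d_{l+1} × d_l) such that each adjacent pair is balanced: W_l W_l^T = W_{l+1}^T W_{l+1} for l = 1, ..., L-1. Let J = W_L W_{L-1} ⋯ W_1. Then J^T J = (W_1^T W_1)^L. -/
open Matrix

/-- The product `W_{k-1} ⋯ W_1 W_0` of the first `k` layers of a deep linear network
(layers indexed from `0`), as a matrix from the input space to the `k`-th space. -/
def layerProd {d : ℕ → ℕ} (W : (l : ℕ) → Matrix (Fin (d (l + 1))) (Fin (d l)) ℝ) :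
    (k : ℕ) → Matrix (Fin (d k)) (Fin (d 0)) ℝ
  | 0 => 1
  | k + 1 => W k * layerProd W k

/-- if each adjacent pair of layers is balanced (`W_l W_lᵀ = W_{l+1}ᵀ W_{l+1}`),
then the Gram matrix of the end-to-end product `J = W_L ⋯ W_1` satisfies
`Jᵀ J = (W_1ᵀ W_1)^L`. -/
theorem gram_of_balanced_product {d : ℕ → ℕ} {L : ℕ} (hL : 1 ≤ L)
    (W : (l : ℕ) → Matrix (Fin (d (l + 1))) (Fin (d l)) ℝ)
    (hbal : ∀ l, l + 1 < L → W l * (W l)ᵀ = (W (l + 1))ᵀ * W (l + 1)) :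
    (layerProd W L)ᵀ * layerProd W L = ((W 0)ᵀ * W 0) ^ L := by
  have key : ∀ k, k < L → (W k)ᵀ * W k * layerProd W k
      = layerProd W k * ((W 0)ᵀ * W 0) := by
    intro k
    induction k with
    | zero => intro _; simp [layerProd]
    | succ k ih =>
      intro hk
      have hb := (hbal k hk).symm
      have ih' := ih (Nat.lt_of_succ_lt hk)
      show (W (k+1))ᵀ * W (k+1) * (W k * layerProd W k)
          = (W k * layerProd W k) * ((W 0)ᵀ * W 0)
      rw [hb]
      calc W k * (W k)ᵀ * (W k * layerProd W k)
          = W k * ((W k)ᵀ * W k * layerProd W k) := by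
            simp only [Matrix.mul_assoc]
        _ = W k * (layerProd W k * ((W 0)ᵀ * W 0)) := by rw [ih']
        _ = (W k * layerProd W k) * ((W 0)ᵀ * W 0) := by rw [Matrix.mul_assoc]
  have main : ∀ k, k ≤ L → (layerProd W k)ᵀ * layerProd W k = ((W 0)ᵀ * W 0) ^ k := by
    intro k
    induction k with
    | zero => intro _; simp [layerProd]
    | succ k ih =>
      intro hk
      have ih' := ih (Nat.le_of_succ_le hk)
      show (W k * layerProd W k)ᵀ * (W k * layerProd W k) = _
      rw [Matrix.transpose_mul]
      calc (layerProd W k)ᵀ * (W k)ᵀ * (W k * layerProd W k)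
          = (layerProd W k)ᵀ * ((W k)ᵀ * W k * layerProd W k) := by
            simp only [Matrix.mul_assoc]
        _ = (layerProd W k)ᵀ * (layerProd W k * ((W 0)ᵀ * W 0)) := by rw [key k hk]
        _ = (layerProd W k)ᵀ * layerProd W k * ((W 0)ᵀ * W 0) := by rw [Matrix.mul_assoc]
        _ = ((W 0)ᵀ * W 0) ^ k * ((W 0)ᵀ * W 0) := by rw [ih']
        _ = ((W 0)ᵀ * W 0) ^ (k + 1) := by rw [pow_succ]
  exact main L le_rfl
end

section
/- Let W_1, ..., W_L be real matrices with every adjacent pair balanced (W_l W_l^T = W_{l+1}^T W_{l+1}), and let J = W_L ⋯ W_1. Then W_1^T W_1 is the unique positive semidefinite L-th root of J^T J; in particular (J^T J)^{1/L} = W_1^T W_1, where the L-th root is taken via the spectral calculus on the positive semidefinite matrix J^T J. -/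
/-!
Balancedness lets each factor `W_l W_lᵀ` inside `Jᵀ J` be traded for `W_{l+1}ᵀ W_{l+1}`; peeling
the layers off one at a time gives `Jᵀ J = (W_0ᵀ W_0)^L`. Uniqueness holds because `L`-th powers
are injective on positive elements: the continuous functional calculus recovers `a ≥ 0` from
`a ^ L` as `(a ^ L) ^ (1 / L)`.
-/

open Matrix

namespace CFC

variable {A : Type*} [PartialOrder A] [Ring A] [StarRing A] [TopologicalSpace A]
  [StarOrderedRing A] [Algebra ℝ A] [ContinuousFunctionalCalculus ℝ A IsSelfAdjoint]
  [NonnegSpectrumClass ℝ A] [IsSemitopologicalRing A] [T2Space A]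

lemma pow_rpow_inv_natCast {a : A} (ha : 0 ≤ a) {n : ℕ} (hn : n ≠ 0) :
    (a ^ n) ^ (n⁻¹ : ℝ) = a := by
  rw [← rpow_natCast a n, rpow_rpow_of_exponent_nonneg a _ _ n.cast_nonneg (by positivity),
    mul_inv_cancel₀ (Nat.cast_ne_zero.2 hn), rpow_one a]

lemma pow_left_inj₀ {a b : A} (ha : 0 ≤ a) (hb : 0 ≤ b) {n : ℕ} (hn : n ≠ 0) :
    a ^ n = b ^ n ↔ a = b :=
  ⟨fun h ↦ by rw [← pow_rpow_inv_natCast ha hn, h, pow_rpow_inv_natCast hb hn],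
    congrArg (· ^ n)⟩

end CFC

namespace Matrix

lemma posSemidef_transpose_mul_self {m n : Type*} [Fintype m] [Finite n] (M : Matrix m n ℝ) :
    (Mᵀ * M).PosSemidef := by
  simpa only [conjTranspose_eq_transpose_of_trivial] using posSemidef_conjTranspose_mul_self M

lemma transpose_mul_pow_mul {m n R : Type*} [Fintype m] [Fintype n] [DecidableEq m]
    [DecidableEq n] [CommSemiring R] (M : Matrix m n R) (k : ℕ) :
    Mᵀ * (M * Mᵀ) ^ k * M = (Mᵀ * M) ^ (k + 1) := by
  induction k with
  | zero => simp
  | succ k ih =>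
    calc Mᵀ * (M * Mᵀ) ^ (k + 1) * M = Mᵀ * (M * Mᵀ) ^ k * M * (Mᵀ * M) := by
          simp only [pow_succ, Matrix.mul_assoc]
      _ = (Mᵀ * M) ^ (k + 1 + 1) := by rw [ih, ← pow_succ]

open scoped ComplexOrder MatrixOrder in
lemma PosSemidef.pow_left_inj {n 𝕜 : Type*} [Fintype n] [DecidableEq n] [RCLike 𝕜]
    {A B : Matrix n n 𝕜} (hA : A.PosSemidef) (hB : B.PosSemidef) {k : ℕ} (hk : k ≠ 0) :
    A ^ k = B ^ k ↔ A = B :=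
  CFC.pow_left_inj₀ hA.nonneg hB.nonneg hk

end Matrix

section DeepLinearNetwork

variable {d : ℕ → ℕ} (W : (l : ℕ) → Matrix (Fin (d (l + 1))) (Fin (d l)) ℝ)

lemma transpose_layerProd_mul_pow_mul_layerProd {k : ℕ}
    (hbal : ∀ l < k, W l * (W l)ᵀ = (W (l + 1))ᵀ * W (l + 1)) (m : ℕ) :
    (layerProd W k)ᵀ * ((W k)ᵀ * W k) ^ m * layerProd W k = ((W 0)ᵀ * W 0) ^ (m + k) := by
  induction k generalizing m with
  | zero => simp [layerProd]
  | succ k ih =>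
    calc (layerProd W (k + 1))ᵀ * ((W (k + 1))ᵀ * W (k + 1)) ^ m * layerProd W (k + 1)
        = (layerProd W k)ᵀ * ((W k)ᵀ * (W k * (W k)ᵀ) ^ m * W k) * layerProd W k := by
          rw [layerProd, ← hbal k k.lt_succ_self, transpose_mul]
          simp only [Matrix.mul_assoc]
      _ = ((W 0)ᵀ * W 0) ^ (m + (k + 1)) := by
          rw [transpose_mul_pow_mul, ih (fun l hl ↦ hbal l (hl.trans k.lt_succ_self)),
            Nat.add_right_comm, add_assoc]

lemma transpose_layerProd_mul_layerProd {k : ℕ}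
    (hbal : ∀ l < k, W l * (W l)ᵀ = (W (l + 1))ᵀ * W (l + 1)) :
    (layerProd W (k + 1))ᵀ * layerProd W (k + 1) = ((W 0)ᵀ * W 0) ^ (k + 1) := by
  calc (layerProd W (k + 1))ᵀ * layerProd W (k + 1)
      = (layerProd W k)ᵀ * ((W k)ᵀ * W k) ^ 1 * layerProd W k := by
        rw [pow_one, layerProd, transpose_mul]
        simp only [Matrix.mul_assoc]
    _ = ((W 0)ᵀ * W 0) ^ (k + 1) := by
        rw [transpose_layerProd_mul_pow_mul_layerProd W hbal, Nat.add_comm 1 k]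

end DeepLinearNetwork

/-- if all adjacent pairs of layers are balanced, then `W_1ᵀ W_1` is the unique
positive semidefinite `L`-th root of `Jᵀ J`, where `J = W_L ⋯ W_1`; in particular
`(Jᵀ J)^{1/L} = W_1ᵀ W_1`. -/
theorem first_layer_is_unique_psd_root {d : ℕ → ℕ} {L : ℕ} (hL : 1 ≤ L)
    (W : (l : ℕ) → Matrix (Fin (d (l + 1))) (Fin (d l)) ℝ)
    (hbal : ∀ l, l + 1 < L → W l * (W l)ᵀ = (W (l + 1))ᵀ * W (l + 1)) :
    ((W 0)ᵀ * W 0).PosSemidef ∧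
    ((W 0)ᵀ * W 0) ^ L = (layerProd W L)ᵀ * layerProd W L ∧
    ∀ B : Matrix (Fin (d 0)) (Fin (d 0)) ℝ,
      B.PosSemidef → B ^ L = (layerProd W L)ᵀ * layerProd W L → B = (W 0)ᵀ * W 0 := by
  obtain ⟨k, rfl⟩ : ∃ k, L = k + 1 := Nat.exists_eq_add_of_le' hL
  have hpsd := posSemidef_transpose_mul_self (W 0)
  have hpow := transpose_layerProd_mul_layerProd W (k := k) fun l hl ↦ hbal l (by omega)
  refine ⟨hpsd, hpow.symm, fun B hB hBpow ↦ ?_⟩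
  exact (hB.pow_left_inj hpsd k.succ_ne_zero).1 (hBpow.trans hpow)
end

section
/- Suppose W_l(t) (l = 1,...,L) are continuously differentiable matrix-valued functions of t ≥ 0 satisfying gradient flow dynamics for the loss L(θ) = ℓ(W_L ⋯ W_1) of a deep linear network, i.e., dW_l/dt = -(∏_{j>l} W_j)^T ∇ℓ(W_L⋯W_1) (∏_{j<l} W_j)^T. Then for each l, the quantity W_{l+1}(t)^T W_{l+1}(t) - W_l(t) W_l(t)^T is constant in t. -/
open Matrix

/-- The partial product `W_{b-1} W_{b-2} ⋯ W_a` of layers `a, a+1, …, b-1` of a deep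
linear network with square layers (empty product is the identity). -/
noncomputable def partialProd {n : ℕ} (W : ℕ → Matrix (Fin n) (Fin n) ℝ) (a b : ℕ) :
    Matrix (Fin n) (Fin n) ℝ :=
  (((List.range' a (b - a)).reverse).map W).prod

/-!
Writing `D_l = -(∏_{j>l} W_j)ᵀ G (∏_{j<l} W_j)ᵀ` for the velocity of layer `l`, the factor
`∏_{j>l} W_j` splits as `(∏_{j>l+1} W_j) W_{l+1}` and `∏_{j<l+1} W_j` as `W_l ∏_{j<l} W_j`,
which gives the balancing identity `W_{l+1}ᵀ D_{l+1} = D_l W_lᵀ`. The time derivative of the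
imbalance `W_{l+1}ᵀ W_{l+1} - W_l W_lᵀ` is `X + Xᵀ - (X + Xᵀ)` with `X` the common value of
both sides, hence zero.
-/

section PartialProd

variable {n : ℕ} (W : ℕ → Matrix (Fin n) (Fin n) ℝ)

theorem partialProd_eq_partialProd_succ_mul {a b : ℕ} (h : a < b) :
    partialProd W a b = partialProd W (a + 1) b * W a := by
  rw [partialProd, partialProd, show b - a = b - (a + 1) + 1 by omega, List.range'_succ]
  simp

theorem partialProd_succ_right {a b : ℕ} (h : a ≤ b) :
    partialProd W a (b + 1) = W b * partialProd W a b := by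
  rw [partialProd, partialProd, show b + 1 - a = b - a + 1 by omega, List.range'_concat,
    one_mul, Nat.add_sub_cancel' h]
  simp

end PartialProd

section LayerGrad

variable {n : ℕ} (Gℓ : Matrix (Fin n) (Fin n) ℝ → Matrix (Fin n) (Fin n) ℝ)
  (W : ℕ → Matrix (Fin n) (Fin n) ℝ) (L : ℕ)

/-- Minus the gradient of `W ↦ ℓ(W_{L-1} ⋯ W_0)` with respect to layer `l`, when `Gℓ = ∇ℓ`. -/
noncomputable def layerGrad (l : ℕ) : Matrix (Fin n) (Fin n) ℝ :=
  -((partialProd W (l + 1) L)ᵀ * Gℓ (partialProd W 0 L) * (partialProd W 0 l)ᵀ)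

theorem transpose_mul_layerGrad_succ {l : ℕ} (hl : l + 1 < L) :
    (W (l + 1))ᵀ * layerGrad Gℓ W L (l + 1) = layerGrad Gℓ W L l * (W l)ᵀ := by
  simp only [layerGrad, Matrix.mul_neg, Matrix.neg_mul, neg_inj]
  rw [partialProd_eq_partialProd_succ_mul W hl, partialProd_succ_right W (Nat.zero_le l)]
  simp only [Matrix.transpose_mul, Matrix.mul_assoc]

end LayerGrad

section EntrywiseDeriv

variable {m n p : Type*}

/-- Matrices carry no global norm, so derivatives of matrix-valued curves are taken entrywise. -/
def HasEntrywiseDerivAt (F : ℝ → Matrix m n ℝ) (F' : Matrix m n ℝ) (t : ℝ) : Prop :=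
  ∀ i j, HasDerivAt (fun s => F s i j) (F' i j) t

namespace HasEntrywiseDerivAt

variable {t : ℝ}

theorem transpose {F : ℝ → Matrix m n ℝ} {F' : Matrix m n ℝ} (hF : HasEntrywiseDerivAt F F' t) :
    HasEntrywiseDerivAt (fun s => (F s)ᵀ) F'ᵀ t :=
  fun i j => hF j i

theorem sub {F G : ℝ → Matrix m n ℝ} {F' G' : Matrix m n ℝ} (hF : HasEntrywiseDerivAt F F' t)
    (hG : HasEntrywiseDerivAt G G' t) : HasEntrywiseDerivAt (fun s => F s - G s) (F' - G') t :=
  fun i j => (hF i j).sub (hG i j)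

theorem mul [Fintype n] {F : ℝ → Matrix m n ℝ} {G : ℝ → Matrix n p ℝ} {F' : Matrix m n ℝ} {G' : Matrix n p ℝ}
    (hF : HasEntrywiseDerivAt F F' t) (hG : HasEntrywiseDerivAt G G' t) :
    HasEntrywiseDerivAt (fun s => F s * G s) (F' * G t + F t * G') t := by
  intro i k
  simp only [Matrix.add_apply, Matrix.mul_apply, ← Finset.sum_add_distrib]
  exact HasDerivAt.fun_sum fun j _ => (hF i j).mul (hG j k)

end HasEntrywiseDerivAt

theorem eq_of_hasEntrywiseDerivAt_zero {F : ℝ → Matrix m n ℝ}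
    (hF : ∀ t, HasEntrywiseDerivAt F 0 t) (t s : ℝ) : F t = F s := by
  ext i j
  exact is_const_of_deriv_eq_zero (fun u => (hF u i j).differentiableAt)
    (fun u => (hF u i j).deriv) t s

end EntrywiseDeriv

theorem hasEntrywiseDerivAt_imbalance_zero {n L l : ℕ} (hl : l + 1 < L)
    (W : ℕ → ℝ → Matrix (Fin n) (Fin n) ℝ)
    (Gℓ : Matrix (Fin n) (Fin n) ℝ → Matrix (Fin n) (Fin n) ℝ) {t : ℝ}
    (hflow : ∀ k < L, HasEntrywiseDerivAt (W k) (layerGrad Gℓ (fun m => W m t) L k) t) :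
    HasEntrywiseDerivAt (fun s => (W (l + 1) s)ᵀ * W (l + 1) s - W l s * (W l s)ᵀ) 0 t := by
  have hbalance := transpose_mul_layerGrad_succ Gℓ (fun m => W m t) L hl
  have hupper := hflow (l + 1) hl
  have hlower := hflow l (by omega)
  have hbalance_transpose := congrArg Matrix.transpose hbalance
  simp only [Matrix.transpose_mul, Matrix.transpose_transpose] at hbalance_transpose
  convert (hupper.transpose.mul hupper).sub (hlower.mul hlower.transpose) using 1
  rw [hbalance, hbalance_transpose, add_comm, sub_self]

/-- under gradient flow dynamics for a deep linear network with loss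
`ℓ(W_L ⋯ W_1)`, i.e. `dW_l/dt = -(∏_{j>l} W_j)ᵀ ∇ℓ(W_L ⋯ W_1) (∏_{j<l} W_j)ᵀ`
(stated entrywise), the imbalance `W_{l+1}ᵀ W_{l+1} - W_l W_lᵀ` is constant in time.
Layers are indexed `0, …, L-1`. -/
theorem imbalance_constant_under_gradient_flow {n L : ℕ}
    (W : ℕ → ℝ → Matrix (Fin n) (Fin n) ℝ)
    (Gℓ : Matrix (Fin n) (Fin n) ℝ → Matrix (Fin n) (Fin n) ℝ)
    (hflow : ∀ l < L, ∀ t : ℝ, ∀ i j,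
      HasDerivAt (fun s => W l s i j)
        ((-((partialProd (fun m => W m t) (l + 1) L)ᵀ *
            Gℓ (partialProd (fun m => W m t) 0 L) *
            (partialProd (fun m => W m t) 0 l)ᵀ)) i j) t) :
    ∀ l, l + 1 < L → ∀ t : ℝ,
      (W (l + 1) t)ᵀ * W (l + 1) t - W l t * (W l t)ᵀ =
      (W (l + 1) 0)ᵀ * W (l + 1) 0 - W l 0 * (W l 0)ᵀ := by
  intro l hl t
  exact eq_of_hasEntrywiseDerivAt_zero
    (fun s => hasEntrywiseDerivAt_imbalance_zero hl W Gℓ fun k hk => hflow k hk s) t 0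
end

section
/- Let W_1(t),...,W_L(t) evolve so that for each l, W_l(t) W_l(t)^T - W_{l+1}(t)^T W_{l+1}(t) = e^{-2λt} C_l with λ > 0, and suppose ‖W_l(t)‖_F ≤ C_F for all l, t. Let c_max = max_l ‖C_l‖_F, A(t) = (W_L(t)⋯W_1(t))^T (W_L(t)⋯W_1(t)), and set Ĉ_F = max(C_F, 1). Then for t large enough that e^{-2λt} c_max ≤ C_F, ‖A(t) - (W_1(t)^T W_1(t))^L‖_F ≤ 2^L e^{-2λt} c_max Ĉ_F^{2L}. -/
open Matrix

/-- The Frobenius norm of a real matrix. -/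
noncomputable def frobNorm {m n : Type*} [Fintype m] [Fintype n] (A : Matrix m n ℝ) : ℝ :=
  Real.sqrt (∑ i, ∑ j, (A i j) ^ 2)

attribute [local instance] Matrix.frobeniusSeminormedAddCommGroup Matrix.frobeniusNormedSpace

lemma frobNorm_eq {m n : Type*} [Fintype m] [Fintype n] (A : Matrix m n ℝ) :
    frobNorm A = ‖A‖ := by
  rw [frobNorm, Matrix.frobenius_norm_def]
  have h : ∀ i j, ‖A i j‖ ^ (2 : ℝ) = (A i j) ^ 2 := by
    intro i j
    rw [show (2 : ℝ) = ((2 : ℕ) : ℝ) by norm_num, Real.rpow_natCast, Real.norm_eq_abs, sq_abs]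
  simp_rw [h]
  rw [Real.sqrt_eq_rpow]

lemma aux_nat_pow : ∀ n : ℕ, n * (n - 1) ≤ 2 ^ n := by
  intro n
  induction n with
  | zero => simp
  | succ n ih =>
    rcases Nat.lt_or_ge n 3 with h | h
    · interval_cases n <;> decide
    · have h1 : n + 1 ≤ 2 * (n - 1) := by omega
      calc (n + 1) * ((n + 1) - 1) = (n + 1) * n := by rw [Nat.add_sub_cancel]
        _ ≤ (2 * (n - 1)) * n := Nat.mul_le_mul_right n h1
        _ = 2 * (n * (n - 1)) := by ring
        _ ≤ 2 * 2 ^ n := Nat.mul_le_mul_left 2 ih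
        _ = 2 ^ (n + 1) := by rw [pow_succ]; ring

lemma layer_pow_comm {n p : ℕ} (P : Matrix (Fin n) (Fin p) ℝ) (Q : Matrix (Fin p) (Fin n) ℝ) :
    ∀ m : ℕ, (P * Q) ^ (m + 1) = P * (Q * P) ^ m * Q
  | 0 => by simp
  | m + 1 => by
    rw [pow_succ, layer_pow_comm P Q m, pow_succ]
    simp only [Matrix.mul_assoc]

lemma norm_pow_mul_le {n p : ℕ} (X : Matrix (Fin n) (Fin n) ℝ) (b : ℝ) (hX : ‖X‖ ≤ b)
    (Z : Matrix (Fin n) (Fin p) ℝ) : ∀ m : ℕ, ‖X ^ m * Z‖ ≤ b ^ m * ‖Z‖ := by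
  intro m
  have hb : 0 ≤ b := le_trans (norm_nonneg X) hX
  induction m generalizing Z with
  | zero => simp
  | succ m ih =>
    calc ‖X ^ (m + 1) * Z‖ = ‖X ^ m * (X * Z)‖ := by rw [pow_succ, Matrix.mul_assoc]
      _ ≤ b ^ m * ‖X * Z‖ := ih (X * Z)
      _ ≤ b ^ m * (‖X‖ * ‖Z‖) :=
          mul_le_mul_of_nonneg_left (Matrix.frobenius_norm_mul X Z) (pow_nonneg hb m)
      _ ≤ b ^ m * (b * ‖Z‖) :=
          mul_le_mul_of_nonneg_left
            (mul_le_mul_of_nonneg_right hX (norm_nonneg Z)) (pow_nonneg hb m)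
      _ = b ^ (m + 1) * ‖Z‖ := by rw [pow_succ]; ring

lemma sandwich_norm_le {p q : ℕ} (Wm : Matrix (Fin p) (Fin q) ℝ) (M : Matrix (Fin p) (Fin p) ℝ)
    (K : ℝ) (hW : ‖Wm‖ ≤ K) : ‖Wmᵀ * M * Wm‖ ≤ K * ‖M‖ * K := by
  have h0 : 0 ≤ K := le_trans (norm_nonneg _) hW
  calc ‖Wmᵀ * M * Wm‖ ≤ ‖Wmᵀ * M‖ * ‖Wm‖ := Matrix.frobenius_norm_mul _ _
    _ ≤ ‖Wmᵀ‖ * ‖M‖ * ‖Wm‖ :=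
        mul_le_mul_of_nonneg_right (Matrix.frobenius_norm_mul _ _) (norm_nonneg _)
    _ = ‖Wm‖ * ‖M‖ * ‖Wm‖ := by rw [Matrix.frobenius_norm_transpose]
    _ ≤ K * ‖M‖ * K :=
        mul_le_mul (mul_le_mul_of_nonneg_right hW (norm_nonneg M)) hW (norm_nonneg _)
          (mul_nonneg h0 (norm_nonneg M))

lemma norm_pow_sub_pow {n : ℕ} (b : ℝ) (hb : 0 ≤ b) :
    ∀ (m : ℕ) (X Y : Matrix (Fin n) (Fin n) ℝ), ‖X‖ ≤ b → ‖Y‖ ≤ b →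
      ‖X ^ (m + 1) - Y ^ (m + 1)‖ ≤ ((m : ℝ) + 1) * ‖X - Y‖ * b ^ m := by
  intro m
  induction m with
  | zero => intro X Y _ _; simp
  | succ m ih =>
    intro X Y hX hY
    have hid : X ^ (m + 1 + 1) - Y ^ (m + 1 + 1)
        = X ^ (m + 1) * (X - Y) + (X ^ (m + 1) - Y ^ (m + 1)) * Y := by
      rw [pow_succ, pow_succ]; noncomm_ring
    have h2 : ‖(X ^ (m + 1) - Y ^ (m + 1)) * Y‖ ≤ (((m : ℝ) + 1) * ‖X - Y‖ * b ^ m) * b := by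
      calc ‖(X ^ (m + 1) - Y ^ (m + 1)) * Y‖ ≤ ‖X ^ (m + 1) - Y ^ (m + 1)‖ * ‖Y‖ :=
            Matrix.frobenius_norm_mul _ _
        _ ≤ (((m : ℝ) + 1) * ‖X - Y‖ * b ^ m) * b :=
            mul_le_mul (ih X Y hX hY) hY (norm_nonneg _)
              (mul_nonneg (mul_nonneg (by positivity) (norm_nonneg _)) (pow_nonneg hb m))
    calc ‖X ^ (m + 1 + 1) - Y ^ (m + 1 + 1)‖
        ≤ ‖X ^ (m + 1) * (X - Y)‖ + ‖(X ^ (m + 1) - Y ^ (m + 1)) * Y‖ := by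
          rw [hid]; exact norm_add_le _ _
      _ ≤ b ^ (m + 1) * ‖X - Y‖ + (((m : ℝ) + 1) * ‖X - Y‖ * b ^ m) * b :=
          add_le_add (norm_pow_mul_le X b hX (X - Y) (m + 1)) h2
      _ = ((↑(m + 1) : ℝ) + 1) * ‖X - Y‖ * b ^ (m + 1) := by
          rw [pow_succ]; push_cast; ring

lemma conj_norm_le {d : ℕ → ℕ} {L : ℕ}
    (W : (l : ℕ) → Matrix (Fin (d (l + 1))) (Fin (d l)) ℝ)
    (K : ℝ) (hW : ∀ l < L, ‖W l‖ ≤ K) :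
    ∀ k, k ≤ L → ∀ (M : Matrix (Fin (d k)) (Fin (d k)) ℝ),
      ‖(layerProd W k)ᵀ * M * layerProd W k‖ ≤ K ^ (2 * k) * ‖M‖ := by
  intro k
  induction k with
  | zero => intro _ M; simp [layerProd]
  | succ k ih =>
    intro hk M
    have hkL : k < L := by omega
    have hK0 : 0 ≤ K := le_trans (norm_nonneg _) (hW k hkL)
    have h1 : (layerProd W (k + 1))ᵀ * M * layerProd W (k + 1)
        = (layerProd W k)ᵀ * ((W k)ᵀ * M * W k) * layerProd W k := by
      show (W k * layerProd W k)ᵀ * M * (W k * layerProd W k) = _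
      rw [Matrix.transpose_mul]
      simp only [Matrix.mul_assoc]
    rw [h1]
    calc ‖(layerProd W k)ᵀ * ((W k)ᵀ * M * W k) * layerProd W k‖
        ≤ K ^ (2 * k) * ‖(W k)ᵀ * M * W k‖ := ih (by omega) _
      _ ≤ K ^ (2 * k) * (K * ‖M‖ * K) :=
          mul_le_mul_of_nonneg_left (sandwich_norm_le (W k) M K (hW k hkL))
            (pow_nonneg hK0 _)
      _ = K ^ (2 * (k + 1)) * ‖M‖ := by
          rw [show 2 * (k + 1) = 2 * k + 2 by omega, pow_add]; ring

/-- suppose the layers `W_1(t), …, W_L(t)` (indexed `0, …, L-1` here) satisfy the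
exponential imbalance decay `W_l(t) W_l(t)ᵀ - W_{l+1}(t)ᵀ W_{l+1}(t) = e^{-2λt} C_l` with
`λ > 0`, and are uniformly bounded in Frobenius norm by `C_F`. With `c_max = max_l ‖C_l‖_F`,
`Ĉ_F = max(C_F, 1)` and `A(t)` the Gram matrix of the end-to-end product, for every `t` large
enough that `e^{-2λt} c_max ≤ C_F` we have
`‖A(t) - (W_1(t)ᵀ W_1(t))^L‖_F ≤ 2^L e^{-2λt} c_max Ĉ_F^{2L}`. -/
theorem agop_close_to_first_layer_power {d : ℕ → ℕ} {L : ℕ} (hL : 1 ≤ L)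
    (W : (l : ℕ) → ℝ → Matrix (Fin (d (l + 1))) (Fin (d l)) ℝ)
    (lam : ℝ) (hlam : 0 < lam)
    (C : (l : ℕ) → Matrix (Fin (d (l + 1))) (Fin (d (l + 1))) ℝ)
    (hdecay : ∀ l, l + 1 < L → ∀ t : ℝ,
      W l t * (W l t)ᵀ - (W (l + 1) t)ᵀ * W (l + 1) t = Real.exp (-(2 * lam) * t) • C l)
    (CF : ℝ) (hCF : ∀ l < L, ∀ t : ℝ, frobNorm (W l t) ≤ CF)
    (cmax : ℝ) (hcmax : ∀ l, l + 1 < L → frobNorm (C l) ≤ cmax)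
    (hcmax0 : 0 ≤ cmax) :
    ∀ t : ℝ, Real.exp (-(2 * lam) * t) * cmax ≤ CF →
      frobNorm ((layerProd (fun l => W l t) L)ᵀ * layerProd (fun l => W l t) L -
          ((W 0 t)ᵀ * W 0 t) ^ L) ≤
        2 ^ L * Real.exp (-(2 * lam) * t) * cmax * (max CF 1) ^ (2 * L) := by
  intro t _
  have hL1 : (1 : ℝ) ≤ (L : ℝ) := by exact_mod_cast hL
  set ε := Real.exp (-(2 * lam) * t) with hεdef
  have hε : 0 < ε := Real.exp_pos _
  set K := max CF 1 with hKdef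
  have hK1 : (1 : ℝ) ≤ K := le_max_right _ _
  have hK0 : (0 : ℝ) ≤ K := by linarith
  set Wt : (l : ℕ) → Matrix (Fin (d (l + 1))) (Fin (d l)) ℝ := fun l => W l t with hWtdef
  have hWK : ∀ l < L, ‖Wt l‖ ≤ K := by
    intro l hl
    have := hCF l hl t
    rw [frobNorm_eq] at this
    exact le_trans this (le_max_left _ _)
  set B := layerProd Wt with hBdef
  set D : ℕ → Matrix (Fin (d 0)) (Fin (d 0)) ℝ :=
    fun l => (B l)ᵀ * ((Wt l)ᵀ * Wt l) ^ (L - l) * B l with hDdef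
  have hDL : D L = (B L)ᵀ * B L := by
    simp [hDdef, Nat.sub_self]
  have hD0 : D 0 = ((Wt 0)ᵀ * Wt 0) ^ L := by
    simp [hDdef, hBdef, layerProd]
  rw [frobNorm_eq]
  have hgoal : (layerProd Wt L)ᵀ * layerProd Wt L - ((Wt 0)ᵀ * Wt 0) ^ L = D L - D 0 := by
    rw [hDL, hD0]
  rw [hgoal, (Finset.sum_range_sub D L).symm]
  have hterm : ∀ l ∈ Finset.range L,
      ‖D (l + 1) - D l‖ ≤ ((L : ℝ) - 1) * (ε * cmax) * K ^ (2 * L) := by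
    intro l hl
    rw [Finset.mem_range] at hl
    obtain ⟨m, hm⟩ : ∃ m, L = l + 1 + m := ⟨L - (l + 1), by omega⟩
    have hLl : L - l = m + 1 := by omega
    have hLl1 : L - (l + 1) = m := by omega
    set X := (Wt (l + 1))ᵀ * Wt (l + 1) with hXdef
    set Y := Wt l * (Wt l)ᵀ with hYdef
    have hDl1 : D (l + 1) = (B l)ᵀ * ((Wt l)ᵀ * X ^ m * Wt l) * B l := by
      simp only [hDdef, hLl1]
      show (layerProd Wt (l + 1))ᵀ * X ^ m * layerProd Wt (l + 1) = _
      show (Wt l * layerProd Wt l)ᵀ * X ^ m * (Wt l * layerProd Wt l) = _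
      rw [Matrix.transpose_mul]
      simp only [Matrix.mul_assoc, hBdef]
    have hDl : D l = (B l)ᵀ * ((Wt l)ᵀ * Y ^ m * Wt l) * B l := by
      simp only [hDdef, hLl]
      rw [layer_pow_comm (Wt l)ᵀ (Wt l) m]
    have hdiff : D (l + 1) - D l = (B l)ᵀ * ((Wt l)ᵀ * (X ^ m - Y ^ m) * Wt l) * B l := by
      rw [hDl1, hDl]
      simp only [Matrix.mul_sub, Matrix.sub_mul]
    rw [hdiff]
    rcases Nat.eq_zero_or_pos m with hm0 | hmpos
    · subst hm0
      simp only [pow_zero, sub_self, Matrix.mul_zero, Matrix.zero_mul, norm_zero]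
      have : (0 : ℝ) ≤ ((L : ℝ) - 1) := by linarith
      positivity
    · have hl1 : l + 1 < L := by omega
      obtain ⟨k, rfl⟩ : ∃ k, m = k + 1 := ⟨m - 1, by omega⟩
      have hXb : ‖X‖ ≤ K ^ 2 := by
        calc ‖X‖ ≤ ‖(Wt (l + 1))ᵀ‖ * ‖Wt (l + 1)‖ := Matrix.frobenius_norm_mul _ _
          _ = ‖Wt (l + 1)‖ * ‖Wt (l + 1)‖ := by rw [Matrix.frobenius_norm_transpose]
          _ ≤ K * K := mul_le_mul (hWK _ hl1) (hWK _ hl1) (norm_nonneg _) hK0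
          _ = K ^ 2 := (sq K).symm
      have hYb : ‖Y‖ ≤ K ^ 2 := by
        calc ‖Y‖ ≤ ‖Wt l‖ * ‖(Wt l)ᵀ‖ := Matrix.frobenius_norm_mul _ _
          _ = ‖Wt l‖ * ‖Wt l‖ := by rw [Matrix.frobenius_norm_transpose]
          _ ≤ K * K := mul_le_mul (hWK _ (by omega)) (hWK _ (by omega)) (norm_nonneg _) hK0
          _ = K ^ 2 := (sq K).symm
      have hXY : ‖X - Y‖ ≤ ε * cmax := by
        have h := hdecay l hl1 t
        have hXYeq : X - Y = -(ε • C l) := by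
          rw [← hεdef] at h
          rw [← h, hXdef, hYdef]
          abel
        rw [hXYeq, norm_neg, norm_smul, Real.norm_eq_abs, abs_of_pos hε]
        have := hcmax l hl1
        rw [frobNorm_eq] at this
        exact mul_le_mul_of_nonneg_left this hε.le
      have hpow := norm_pow_sub_pow (K ^ 2) (by positivity) k X Y hXb hYb
      have hΔ : ‖(Wt l)ᵀ * (X ^ (k + 1) - Y ^ (k + 1)) * Wt l‖
          ≤ K * (((k : ℝ) + 1) * (ε * cmax) * (K ^ 2) ^ k) * K := by
        have hmid : ‖X ^ (k + 1) - Y ^ (k + 1)‖ ≤ ((k : ℝ) + 1) * (ε * cmax) * (K ^ 2) ^ k := by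
          refine le_trans hpow ?_
          have : ((k : ℝ) + 1) * ‖X - Y‖ ≤ ((k : ℝ) + 1) * (ε * cmax) :=
            mul_le_mul_of_nonneg_left hXY (by positivity)
          exact mul_le_mul_of_nonneg_right this (by positivity)
        calc ‖(Wt l)ᵀ * (X ^ (k + 1) - Y ^ (k + 1)) * Wt l‖
            ≤ K * ‖X ^ (k + 1) - Y ^ (k + 1)‖ * K :=
              sandwich_norm_le (Wt l) _ K (hWK l (by omega))
          _ ≤ K * (((k : ℝ) + 1) * (ε * cmax) * (K ^ 2) ^ k) * K := by
              apply mul_le_mul_of_nonneg_right _ hK0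
              exact mul_le_mul_of_nonneg_left hmid hK0
      have hec : 0 ≤ ε * cmax := mul_nonneg hε.le hcmax0
      have e1 : ((k : ℝ) + 1) ≤ (L : ℝ) - 1 := by
        have hk2 : (k + 2 : ℕ) ≤ L := by omega
        have : ((k + 2 : ℕ) : ℝ) ≤ (L : ℝ) := by exact_mod_cast hk2
        push_cast at this
        linarith
      have e2 : K ^ (2 * l + 2 * k + 2) ≤ K ^ (2 * L) :=
        pow_le_pow_right₀ hK1 (by omega)
      calc ‖(B l)ᵀ * ((Wt l)ᵀ * (X ^ (k + 1) - Y ^ (k + 1)) * Wt l) * B l‖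
          ≤ K ^ (2 * l) * ‖(Wt l)ᵀ * (X ^ (k + 1) - Y ^ (k + 1)) * Wt l‖ :=
            conj_norm_le Wt K hWK l (by omega) _
        _ ≤ K ^ (2 * l) * (K * (((k : ℝ) + 1) * (ε * cmax) * (K ^ 2) ^ k) * K) :=
            mul_le_mul_of_nonneg_left hΔ (pow_nonneg hK0 _)
        _ = ((k : ℝ) + 1) * (ε * cmax) * K ^ (2 * l + 2 * k + 2) := by
            rw [← pow_mul, pow_add, pow_add]; ring
        _ ≤ ((L : ℝ) - 1) * (ε * cmax) * K ^ (2 * L) :=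
            mul_le_mul (mul_le_mul_of_nonneg_right e1 hec) e2 (pow_nonneg hK0 _)
              (mul_nonneg (by linarith) hec)
  have hsum := Finset.sum_le_sum hterm
  have hcast : (L : ℝ) * ((L : ℝ) - 1) ≤ 2 ^ L := by
    have h := aux_nat_pow L
    calc (L : ℝ) * ((L : ℝ) - 1) = ((L * (L - 1) : ℕ) : ℝ) := by
          push_cast [Nat.cast_sub hL]; ring
      _ ≤ ((2 ^ L : ℕ) : ℝ) := by exact_mod_cast h
      _ = 2 ^ L := by push_cast; ring
  have hc : (0 : ℝ) ≤ ε * cmax * K ^ (2 * L) := by positivity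
  calc ‖∑ l ∈ Finset.range L, (D (l + 1) - D l)‖
      ≤ ∑ l ∈ Finset.range L, ‖D (l + 1) - D l‖ := norm_sum_le _ _
    _ ≤ ∑ _l ∈ Finset.range L, ((L : ℝ) - 1) * (ε * cmax) * K ^ (2 * L) := hsum
    _ = (L : ℝ) * (((L : ℝ) - 1) * (ε * cmax) * K ^ (2 * L)) := by
        rw [Finset.sum_const, Finset.card_range, nsmul_eq_mul]
    _ = ((L : ℝ) * ((L : ℝ) - 1)) * (ε * cmax * K ^ (2 * L)) := by ring
    _ ≤ 2 ^ L * (ε * cmax * K ^ (2 * L)) := mul_le_mul_of_nonneg_right hcast hc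
    _ = 2 ^ L * ε * cmax * K ^ (2 * L) := by ring
end

section
/- Let X and Y be d×d real positive semidefinite matrices and L ≥ 1 an integer. Then ‖X^{1/L} - Y^{1/L}‖_F ≤ d^{(L-1)/(2L)} · ‖X - Y‖_F^{1/L}, where X^{1/L} denotes the unique positive semidefinite L-th root. -/
/-!
Diagonalize `R = U diag(r) Uᴴ` and `S = V diag(s) Vᴴ` and put `G = Uᴴ V`, an orthogonal matrix.
By unitary invariance of the Frobenius norm, `‖R^k - S^k‖_F²` is the sum over pairs `(i, j)` of
`G i j ^ 2 * (r i ^ k - s j ^ k) ^ 2`, and the weights `G i j ^ 2` add up to `d`.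
For `a, b ≥ 0` one has `|a - b| ^ L ≤ |a ^ L - b ^ L|`, which compares the sums for `k = 1` and
`k = L` termwise after taking `L`-th roots; the weighted Hölder inequality (concavity of
`t ↦ t ^ (1 / L)`) then yields the factor `d ^ (1 - 1 / L)`.
-/

open Matrix

theorem abs_sub_pow_le_abs_pow_sub {α : Type*} [CommRing α] [LinearOrder α]
    [IsStrictOrderedRing α] {a b : α} (ha : 0 ≤ a) (hb : 0 ≤ b) {L : ℕ} (hL : L ≠ 0) :
    |a - b| ^ L ≤ |a ^ L - b ^ L| := by
  wlog hba : b ≤ a generalizing a b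
  · rw [abs_sub_comm, abs_sub_comm (a ^ L)]
    exact this hb ha (le_of_not_ge hba)
  have hpow : b ^ L ≤ a ^ L := pow_le_pow_left₀ hb hba L
  rw [abs_of_nonneg (sub_nonneg.2 hba), abs_of_nonneg (sub_nonneg.2 hpow)]
  have := pow_add_pow_le (sub_nonneg.2 hba) hb hL
  rw [sub_add_cancel] at this
  linarith

theorem sq_sub_le_rpow_sq_pow_sub {a b : ℝ} (ha : 0 ≤ a) (hb : 0 ≤ b) {L : ℕ} (hL : L ≠ 0) :
    (a - b) ^ 2 ≤ ((a ^ L - b ^ L) ^ 2) ^ (L⁻¹ : ℝ) := by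
  rw [Real.le_rpow_inv_iff_of_pos (sq_nonneg _) (sq_nonneg _) (by positivity), Real.rpow_natCast,
    ← sq_abs, ← sq_abs (a ^ L - b ^ L), ← pow_mul, mul_comm, pow_mul]
  gcongr
  exact abs_sub_pow_le_abs_pow_sub ha hb hL

section Frobenius

variable {m n : Type*} [Fintype m] [Fintype n]

theorem frobNorm_nonneg (A : Matrix m n ℝ) : 0 ≤ frobNorm A :=
  Real.sqrt_nonneg _

theorem frobNorm_sq (A : Matrix m n ℝ) : frobNorm A ^ 2 = ∑ i, ∑ j, A i j ^ 2 :=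
  Real.sq_sqrt (by positivity)

theorem frobNorm_sq_eq_trace (A : Matrix m n ℝ) : frobNorm A ^ 2 = trace (Aᴴ * A) := by
  rw [frobNorm_sq]
  simp only [trace, diag, mul_apply, conjTranspose_apply, star_trivial, sq]
  exact Finset.sum_comm

variable [DecidableEq m] [DecidableEq n]

theorem frobNorm_sq_unitary_mul_mul {U : Matrix m m ℝ} {V : Matrix n n ℝ}
    (hU : U ∈ unitaryGroup m ℝ) (hV : V ∈ unitaryGroup n ℝ) (A : Matrix m n ℝ) :
    frobNorm (U * A * V) ^ 2 = frobNorm A ^ 2 := by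
  have hUU : Uᴴ * U = 1 := Unitary.star_mul_self_of_mem hU
  have hVV : V * Vᴴ = 1 := Unitary.mul_star_self_of_mem hV
  rw [frobNorm_sq_eq_trace, frobNorm_sq_eq_trace, conjTranspose_mul, conjTranspose_mul,
    show Vᴴ * (Aᴴ * Uᴴ) * (U * A * V) = Vᴴ * (Aᴴ * (Uᴴ * U) * A * V) by
      simp only [Matrix.mul_assoc],
    hUU, Matrix.mul_one, trace_mul_comm, Matrix.mul_assoc, hVV, Matrix.mul_one]

theorem frobNorm_sq_of_mem_unitaryGroup {U : Matrix n n ℝ} (hU : U ∈ unitaryGroup n ℝ) :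
    frobNorm U ^ 2 = Fintype.card n := by
  rw [frobNorm_sq_eq_trace, ← star_eq_conjTranspose, Unitary.star_mul_self_of_mem hU, trace_one]

theorem frobNorm_sq_conj_diagonal_sub {U V : Matrix n n ℝ}
    (hU : U ∈ unitaryGroup n ℝ) (hV : V ∈ unitaryGroup n ℝ) (a b : n → ℝ) :
    frobNorm (U * diagonal a * Uᴴ - V * diagonal b * Vᴴ) ^ 2 =
      ∑ i, ∑ j, (a i - b j) ^ 2 * (Uᴴ * V) i j ^ 2 := by
  have hUU : Uᴴ * U = 1 := Unitary.star_mul_self_of_mem hU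
  have hVV : Vᴴ * V = 1 := Unitary.star_mul_self_of_mem hV
  have hconj : Uᴴ * (U * diagonal a * Uᴴ - V * diagonal b * Vᴴ) * V =
      diagonal a * (Uᴴ * V) - (Uᴴ * V) * diagonal b := by
    simp only [Matrix.mul_sub, Matrix.sub_mul, ← mul_assoc, hUU, one_mul]
    simp only [mul_assoc, hVV, mul_one]
  rw [← frobNorm_sq_unitary_mul_mul (Unitary.star_mem hU) hV, star_eq_conjTranspose, hconj,
    frobNorm_sq]
  simp only [Matrix.sub_apply, diagonal_mul, mul_diagonal]
  congr! 2 with i - j -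
  ring

end Frobenius

theorem Matrix.IsHermitian.pow_eq_conj_diagonal {n : Type*} [Fintype n] [DecidableEq n]
    {A : Matrix n n ℝ} (hA : A.IsHermitian) (k : ℕ) :
    A ^ k = (hA.eigenvectorUnitary : Matrix n n ℝ) * diagonal (hA.eigenvalues ^ k) *
      (hA.eigenvectorUnitary : Matrix n n ℝ)ᴴ := by
  conv_lhs => rw [hA.spectral_theorem]
  rw [← map_pow, diagonal_pow, Unitary.conjStarAlgAut_apply, star_eq_conjTranspose]
  simp

theorem Matrix.PosSemidef.frobNorm_sq_sub_le {n : Type*} [Fintype n] [DecidableEq n]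
    {R S : Matrix n n ℝ} (hR : R.PosSemidef) (hS : S.PosSemidef) {L : ℕ} (hL : 1 ≤ L) :
    frobNorm (R - S) ^ 2 ≤
      (Fintype.card n : ℝ) ^ (1 - (L : ℝ)⁻¹) * (frobNorm (R ^ L - S ^ L) ^ 2) ^ (L : ℝ)⁻¹ := by
  have hU : (hR.1.eigenvectorUnitary : Matrix n n ℝ) ∈ unitaryGroup n ℝ :=
    hR.1.eigenvectorUnitary.2
  have hV : (hS.1.eigenvectorUnitary : Matrix n n ℝ) ∈ unitaryGroup n ℝ :=
    hS.1.eigenvectorUnitary.2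
  set G := (hR.1.eigenvectorUnitary : Matrix n n ℝ)ᴴ * hS.1.eigenvectorUnitary
  set r := hR.1.eigenvalues
  set s := hS.1.eigenvalues
  have hL0 : L ≠ 0 := by omega
  have hdiff (k : ℕ) :
      frobNorm (R ^ k - S ^ k) ^ 2 = ∑ p : n × n, G p.1 p.2 ^ 2 * (r p.1 ^ k - s p.2 ^ k) ^ 2 := by
    rw [hR.1.pow_eq_conj_diagonal, hS.1.pow_eq_conj_diagonal, frobNorm_sq_conj_diagonal_sub hU hV,
      ← Fintype.sum_prod_type']
    exact Fintype.sum_congr _ _ fun p => mul_comm _ _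
  have hw : ∑ p : n × n, G p.1 p.2 ^ 2 = Fintype.card n := by
    rw [Fintype.sum_prod_type,
      ← frobNorm_sq_of_mem_unitaryGroup (mul_mem (Unitary.star_mem hU) hV), frobNorm_sq]
    rfl
  calc frobNorm (R - S) ^ 2 = ∑ p : n × n, G p.1 p.2 ^ 2 * (r p.1 - s p.2) ^ 2 := by
        simpa using hdiff 1
    _ ≤ ∑ p : n × n, G p.1 p.2 ^ 2 * ((r p.1 ^ L - s p.2 ^ L) ^ 2) ^ (L : ℝ)⁻¹ := by
      gcongr with p
      exact sq_sub_le_rpow_sq_pow_sub (hR.eigenvalues_nonneg _) (hS.eigenvalues_nonneg _) hL0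
    _ ≤ (∑ p : n × n, G p.1 p.2 ^ 2) ^ (1 - (L : ℝ)⁻¹) *
          (∑ p : n × n, G p.1 p.2 ^ 2 * (((r p.1 ^ L - s p.2 ^ L) ^ 2) ^ (L : ℝ)⁻¹) ^ (L : ℝ))
            ^ (L : ℝ)⁻¹ :=
      Real.inner_le_weight_mul_Lp_of_nonneg _ (by exact_mod_cast hL) _ _ (fun _ => by positivity)
        (fun _ => by positivity)
    _ = _ := by
      simp only [Real.rpow_inv_rpow (sq_nonneg _) (Nat.cast_ne_zero.2 hL0), hw, hdiff]

theorem psd_root_holder_bound_general {d : ℕ} (L : ℕ) (hL : 1 ≤ L)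
    (X Y R S : Matrix (Fin d) (Fin d) ℝ)
    (hR : R.PosSemidef) (hRX : R ^ L = X)
    (hS : S.PosSemidef) (hSY : S ^ L = Y) :
    frobNorm (R - S) ≤ (d : ℝ) ^ (((L : ℝ) - 1) / (2 * L)) * frobNorm (X - Y) ^ ((1 : ℝ) / L) := by
  have key := hR.frobNorm_sq_sub_le hS hL
  rw [hRX, hSY, Fintype.card_fin] at key
  have hrhs : 0 ≤ (d : ℝ) ^ (((L : ℝ) - 1) / (2 * L)) * frobNorm (X - Y) ^ ((1 : ℝ) / L) :=
    mul_nonneg (by positivity) (Real.rpow_nonneg (frobNorm_nonneg _) _)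
  refine (pow_le_pow_iff_left₀ (frobNorm_nonneg _) hrhs two_ne_zero).1 (key.trans_eq ?_)
  rw [mul_pow, ← Real.rpow_mul_natCast d.cast_nonneg, ← Real.rpow_mul_natCast (frobNorm_nonneg _),
    ← Real.rpow_natCast_mul (frobNorm_nonneg _), Nat.cast_ofNat]
  congr 2 <;> field_simp

/-- Wihler's bound: for `d × d` real positive semidefinite matrices `X, Y` and
`L ≥ 1`, the unique positive semidefinite `L`-th roots (here `R` and `S`, characterized by
being PSD with `R^L = X`, `S^L = Y`) satisfy
`‖X^{1/L} - Y^{1/L}‖_F ≤ d^{(L-1)/(2L)} ‖X - Y‖_F^{1/L}`. -/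
theorem psd_root_holder_bound {d : ℕ} (L : ℕ) (hL : 1 ≤ L)
    (X Y R S : Matrix (Fin d) (Fin d) ℝ)
    (hX : X.PosSemidef) (hY : Y.PosSemidef)
    (hR : R.PosSemidef) (hRX : R ^ L = X)
    (hS : S.PosSemidef) (hSY : S ^ L = Y) :
    frobNorm (R - S) ≤ (d : ℝ) ^ (((L : ℝ) - 1) / (2 * L)) * frobNorm (X - Y) ^ ((1 : ℝ) / L) :=
  psd_root_holder_bound_general L hL X Y R S hR hRX hS hSY
end

section
/- For n ≥ 1, let f_n*(x₁,x₂) = (1/n)cos(n² x₁) + x₂ and f(x₁,x₂) = x₂. If x₁ ~ U[-π,π], then: (a) E[∇f_n*(x) ∇f_n*(x)^T] = diag(n²/2, 1); (b) the AGOP of f is diag(0,1); (c) the cosine similarity Tr(A_f^T A_{f_n*})/(‖A_f‖_F ‖A_{f_n*}‖_F) = 1/√(n⁴/4 + 1) → 0 as n → ∞; while (d) |f(x) - f_n*(x)| ≤ 1/n for all x, so f converges uniformly to f_n* in uniform distance as n → ∞. -/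
open MeasureTheory Matrix Real Filter

/-! The perturbation `(1/n) cos(n² x₁)` has amplitude `1/n` but frequency `n²`, so its
derivative `-n sin(n² x₁)` has size `n`: by oddness its mean over `[-π, π]` vanishes, and since
`n²` is an integer its second moment is `n²/2`. Hence the AGOP of `f_n*` is dominated by a
direction that the AGOP of `f` does not see at all, although `f` is uniformly `1/n`-close. -/

theorem intervalIntegral.integral_neg_self_eq_zero_of_odd {f : ℝ → ℝ} (hf : Function.Odd f)
    (a : ℝ) : ∫ x in -a..a, f x = 0 := by
  have h := intervalIntegral.integral_comp_neg (a := -a) (b := a) f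
  simp only [hf _, intervalIntegral.integral_neg, neg_neg] at h
  linarith

theorem integral_sin_int_mul_sq {k : ℤ} (hk : k ≠ 0) :
    ∫ x in -π..π, sin (k * x) ^ 2 = π := by
  have hk' : (k : ℝ) ≠ 0 := by exact_mod_cast hk
  rw [intervalIntegral.integral_comp_mul_left (fun u => sin u ^ 2) hk', integral_sin_sq,
    mul_neg, sin_neg, sin_int_mul_pi, smul_eq_mul]
  field_simp
  ring

theorem integral_smul_restrict_Icc {E : Type*} [NormedAddCommGroup E] [NormedSpace ℝ E]
    {a b c : ℝ} (hab : a ≤ b) (hc : 0 ≤ c) (g : ℝ → E) :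
    ∫ t, g t ∂((ENNReal.ofReal c)⁻¹ • volume.restrict (Set.Icc a b)) =
      c⁻¹ • ∫ t in a..b, g t := by
  rw [integral_smul_measure, ENNReal.toReal_inv, ENNReal.toReal_ofReal hc,
    integral_Icc_eq_integral_Ioc, intervalIntegral.integral_of_le hab]

theorem hasDerivAt_one_div_mul_cos_sq_mul {c : ℝ} (hc : c ≠ 0) (t : ℝ) :
    HasDerivAt (fun t => 1 / c * cos (c ^ 2 * t)) (-c * sin (c ^ 2 * t)) t :=
  ((((hasDerivAt_id' t).const_mul (c ^ 2)).cos).const_mul (1 / c)).congr_deriv (by field_simp)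

theorem hasGradientAt_comp_zero_add_one {g : ℝ → ℝ} {g' : ℝ}
    {x : EuclideanSpace ℝ (Fin 2)} (hg : HasDerivAt g g' (x 0)) :
    HasGradientAt (fun y : EuclideanSpace ℝ (Fin 2) => g (y 0) + y 1)
      ((EuclideanSpace.equiv (Fin 2) ℝ).symm ![g', 1]) x := by
  rw [hasGradientAt_iff_hasFDerivAt]
  have h0 := (EuclideanSpace.proj (0 : Fin 2) : _ →L[ℝ] ℝ).hasFDerivAt (x := x)
  have h1 := (EuclideanSpace.proj (1 : Fin 2) : _ →L[ℝ] ℝ).hasFDerivAt (x := x)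
  refine ((hg.comp_hasFDerivAt x h0).add h1).congr_fderiv ?_
  ext w
  simp [PiLp.inner_apply, Fin.sum_univ_two, mul_comm]

theorem trace_div_frobNorm_mul_frobNorm_diag (a : ℝ) :
    trace (!![0, 0; 0, 1]ᵀ * !![a, 0; 0, 1]) /
      (frobNorm !![(0 : ℝ), 0; 0, 1] * frobNorm !![a, 0; 0, 1]) = 1 / √(a ^ 2 + 1) := by
  simp [frobNorm, Fin.sum_univ_two, trace_fin_two, mul_apply]

theorem tendsto_one_div_sqrt_atTop_zero :
    Tendsto (fun x : ℝ => 1 / √x) atTop (nhds 0) := by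
  simp only [one_div]
  exact tendsto_inv_atTop_zero.comp tendsto_sqrt_atTop

/-- for `f_n*(x₁,x₂) = (1/n)cos(n²x₁) + x₂` and `f(x₁,x₂) = x₂`, with
`x₁ ~ U[-π,π]`: (a) the AGOP of `f_n*` is `diag(n²/2, 1)` (with
`∇f_n*(x) = (-n sin(n²x₁), 1)`); (b) the AGOP of `f` is `diag(0,1)`; (c) their cosine
similarity is `1/√(n⁴/4 + 1)`, which tends to `0` as `n → ∞`; while (d) `|f - f_n*| ≤ 1/n`
uniformly, so `f` approximates `f_n*` arbitrarily well. -/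
theorem agop_alignment_not_necessary (n : ℕ) (hn : 1 ≤ n) :
    let fn : EuclideanSpace ℝ (Fin 2) → ℝ :=
      fun x => (1 / (n : ℝ)) * Real.cos ((n : ℝ) ^ 2 * x 0) + x 1
    let f : EuclideanSpace ℝ (Fin 2) → ℝ := fun x => x 1
    let gvec : ℝ → (Fin 2 → ℝ) := fun t => ![-(n : ℝ) * Real.sin ((n : ℝ) ^ 2 * t), 1]
    let μ : Measure ℝ :=
      (ENNReal.ofReal (2 * Real.pi))⁻¹ • volume.restrict (Set.Icc (-Real.pi) Real.pi)
    let Afn : Matrix (Fin 2) (Fin 2) ℝ := !![(n : ℝ) ^ 2 / 2, 0; 0, 1]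
    let Af : Matrix (Fin 2) (Fin 2) ℝ := !![0, 0; 0, 1]
    -- the gradient of `f_n*`
    (∀ x : EuclideanSpace ℝ (Fin 2),
      HasGradientAt fn ((EuclideanSpace.equiv (Fin 2) ℝ).symm (gvec (x 0))) x) ∧
    -- (a) AGOP of `f_n*`
    (∀ i j : Fin 2, ∫ t, gvec t i * gvec t j ∂μ = Afn i j) ∧
    -- (b) AGOP of `f`
    vecMulVec ![(0 : ℝ), 1] ![(0 : ℝ), 1] = Af ∧
    -- (c) cosine similarity and its limit
    Matrix.trace (Afᵀ * Afn) / (frobNorm Af * frobNorm Afn) =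
      1 / Real.sqrt ((n : ℝ) ^ 4 / 4 + 1) ∧
    Tendsto (fun m : ℕ => 1 / Real.sqrt ((m : ℝ) ^ 4 / 4 + 1)) atTop (nhds 0) ∧
    -- (d) uniform closeness
    (∀ x : EuclideanSpace ℝ (Fin 2), |f x - fn x| ≤ 1 / (n : ℝ)) := by
  intro fn f gvec μ Afn Af
  have hn0 : (n : ℝ) ≠ 0 := by positivity
  have hμ (g : ℝ → ℝ) : ∫ t, g t ∂μ = (2 * π)⁻¹ * ∫ t in -π..π, g t :=
    integral_smul_restrict_Icc (by linarith [pi_pos]) two_pi_pos.le g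
  have hsin_sq : ∫ t in -π..π, n * sin ((n : ℝ) ^ 2 * t) * (n * sin ((n : ℝ) ^ 2 * t)) =
      n ^ 2 * π := by
    have h := integral_sin_int_mul_sq (k := n ^ 2) (by positivity)
    push_cast at h
    simp_rw [← sq, mul_pow, intervalIntegral.integral_const_mul, h]
  have hsin : ∫ t in -π..π, sin ((n : ℝ) ^ 2 * t) = 0 :=
    intervalIntegral.integral_neg_self_eq_zero_of_odd (fun t => by simp [mul_neg]) π
  refine ⟨fun x => hasGradientAt_comp_zero_add_one (g := fun t => 1 / (n : ℝ) * cos (n ^ 2 * t))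
    (hasDerivAt_one_div_mul_cos_sq_mul hn0 _), ?_, ?_, ?_, ?_, fun x => ?_⟩
  · intro i j
    fin_cases i <;> fin_cases j <;> simp [gvec, Afn, hμ, hsin, hsin_sq]
    · field_simp
    · field_simp
      norm_num
  · ext i j
    fin_cases i <;> fin_cases j <;> simp [Af, vecMulVec]
  · convert trace_div_frobNorm_mul_frobNorm_diag ((n : ℝ) ^ 2 / 2) using 4
    ring
  · exact tendsto_one_div_sqrt_atTop_zero.comp <| tendsto_atTop_add_const_right _ _ <|
      ((tendsto_pow_atTop four_ne_zero).comp tendsto_natCast_atTop_atTop).atTop_div_const four_pos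
  · calc |f x - fn x| = 1 / n * |cos ((n : ℝ) ^ 2 * x 0)| := by
          simp [f, fn, abs_mul]
      _ ≤ 1 / n := mul_le_of_le_one_right (by positivity) (abs_cos_le_one _)
end
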